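/- Let f(x) = |x|²/4 on ℝⁿ. For every smooth vector field V : ℝⁿ → ℝⁿ the operators ℒ and 𝒫 commute: ℒ(𝒫V) = 𝒫(ℒV) pointwise; moreover 𝒫(∇ div_f V) = ∇ div_f(𝒫V) pointwise. -/

import Mathlib

open MeasureTheory Real

noncomputable section

/-- Euclidean space `ℝⁿ`. -/
abbrev En (n : ℕ) := EuclideanSpace ℝ (Fin n)

variable {n : ℕ}

/-- Partial derivative `∂_i u` in the `i`-th coordinate direction. -/
def pd (i : Fin n) (u : En n → ℝ) (x : En n) : ℝ :=
  fderiv ℝ u x (EuclideanSpace.single i 1)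

/-- Euclidean Laplacian `Δu = Σ_i ∂_i∂_i u`. -/
def lap (u : En n → ℝ) (x : En n) : ℝ := ∑ i, pd i (pd i u) x

/-- The drift Laplacian `ℒu = Δu − ⟨x/2, ∇u⟩` for the potential `f(x) = |x|²/4`. -/
def driftLap (u : En n → ℝ) (x : En n) : ℝ :=
  lap u x - ∑ i, (x i / 2) * pd i u x

/-- The drift Laplacian acting componentwise on vector fields. -/
def driftLapV (Y : En n → Fin n → ℝ) (x : En n) (i : Fin n) : ℝ :=
  driftLap (fun y => Y y i) x

/-- The gradient `∇u` as a vector field. -/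
def gradV (u : En n → ℝ) (x : En n) (i : Fin n) : ℝ := pd i u x

/-- The weighted divergence `div_f Y = div Y − ⟨Y, x/2⟩` for `f(x) = |x|²/4`. -/
def divf (Y : En n → Fin n → ℝ) (x : En n) : ℝ :=
  ∑ i, (pd i (fun y => Y y i) x - Y x i * (x i / 2))

/-- `div_f* Y`, the symmetric 2-tensor `(div_f* Y)_{ij} = −(∂_i Y_j + ∂_j Y_i)/2`. -/
def divfStar (Y : En n → Fin n → ℝ) (x : En n) (i j : Fin n) : ℝ :=
  -(pd i (fun y => Y y j) x + pd j (fun y => Y y i) x) / 2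

/-- The weighted divergence of a matrix-valued map:
`(div_f h)_i = Σ_j (∂_j h_{ij} − (x_j/2) h_{ij})`. -/
def divfT (h : En n → Fin n → Fin n → ℝ) (x : En n) (i : Fin n) : ℝ :=
  ∑ j, (pd j (fun y => h y i j) x - (x j / 2) * h x i j)

/-- The operator `𝒫 = div_f ∘ div_f*` on vector fields. -/
def Pop (Y : En n → Fin n → ℝ) : En n → Fin n → ℝ := divfT (divfStar Y)

/-- The Hessian matrix `(Hess u)_{ij} = ∂_i ∂_j u`. -/
def hess (u : En n → ℝ) (x : En n) (i j : Fin n) : ℝ := pd i (pd j u) x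

/-- The Gaussian weight `e^{-f(x)} = e^{-|x|²/4}`. -/
def gw (x : En n) : ℝ := Real.exp (-(‖x‖ ^ 2 / 4))

lemma pd_def (i : Fin n) (u : En n → ℝ) :
    pd i u = fun x => fderiv ℝ u x (EuclideanSpace.single i 1) := rfl

lemma contDiff_pd {u : En n → ℝ} (hu : ContDiff ℝ (⊤ : ℕ∞) u) (i : Fin n) :
    ContDiff ℝ (⊤ : ℕ∞) (pd i u) := by
  have h1 : ContDiff ℝ (⊤ : ℕ∞) (fderiv ℝ u) := hu.fderiv_right (by simp)
  exact (ContinuousLinearMap.apply ℝ ℝ (EuclideanSpace.single i 1)).contDiff.comp h1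

lemma diffAt_of_sm {u : En n → ℝ} (hu : ContDiff ℝ (⊤ : ℕ∞) u) (x : En n) :
    DifferentiableAt ℝ u x := (hu.differentiable (by simp)).differentiableAt

lemma pd_add {u v : En n → ℝ} (i : Fin n) (x : En n)
    (hu : DifferentiableAt ℝ u x) (hv : DifferentiableAt ℝ v x) :
    pd i (fun y => u y + v y) x = pd i u x + pd i v x := by
  simp [pd, fderiv_fun_add hu hv]

lemma pd_sub {u v : En n → ℝ} (i : Fin n) (x : En n)
    (hu : DifferentiableAt ℝ u x) (hv : DifferentiableAt ℝ v x) :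
    pd i (fun y => u y - v y) x = pd i u x - pd i v x := by
  simp [pd, fderiv_fun_sub hu hv]

lemma pd_mul {u v : En n → ℝ} (i : Fin n) (x : En n)
    (hu : DifferentiableAt ℝ u x) (hv : DifferentiableAt ℝ v x) :
    pd i (fun y => u y * v y) x = pd i u x * v x + u x * pd i v x := by
  simp [pd, fderiv_fun_mul hu hv]; ring

lemma pd_const_mul {u : En n → ℝ} (c : ℝ) (i : Fin n) (x : En n)
    (hu : DifferentiableAt ℝ u x) :
    pd i (fun y => c * u y) x = c * pd i u x := by
  simp [pd, fderiv_const_mul hu]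

lemma pd_sum {ι : Type*} {s : Finset ι} {g : ι → En n → ℝ} (i : Fin n) (x : En n)
    (hg : ∀ j ∈ s, DifferentiableAt ℝ (g j) x) :
    pd i (fun y => ∑ j ∈ s, g j y) x = ∑ j ∈ s, pd i (g j) x := by
  simp [pd, fderiv_fun_sum hg]

lemma pd_coord (i j : Fin n) (x : En n) :
    pd i (fun y : En n => y j) x = if j = i then 1 else 0 := by
  have : (fun y : En n => y j) = (EuclideanSpace.proj (𝕜 := ℝ) j : En n →L[ℝ] ℝ) := rfl
  rw [pd_def, this]
  simp only []
  rw [ContinuousLinearMap.fderiv]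
  simp [EuclideanSpace.single_apply]

lemma sm_coord (j : Fin n) : ContDiff ℝ (⊤ : ℕ∞) (fun y : En n => y j) :=
  (EuclideanSpace.proj (𝕜 := ℝ) j : En n →L[ℝ] ℝ).contDiff

lemma pd_comm {u : En n → ℝ} (hu : ContDiff ℝ (⊤ : ℕ∞) u) (i j : Fin n) (x : En n) :
    pd i (pd j u) x = pd j (pd i u) x := by
  have hdiff : Differentiable ℝ u := hu.differentiable (by simp)
  have hf' : ContDiff ℝ (⊤ : ℕ∞) (fderiv ℝ u) := hu.fderiv_right (by simp)
  have hx : HasFDerivAt (fderiv ℝ u) (fderiv ℝ (fderiv ℝ u) x) x :=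
    ((hf'.differentiable (by simp)) x).hasFDerivAt
  have key := second_derivative_symmetric (fun y => (hdiff y).hasFDerivAt) hx
  have hrep : ∀ v w : En n,
      fderiv ℝ (fun y => fderiv ℝ u y v) x w = fderiv ℝ (fderiv ℝ u) x w v := by
    intro v w
    have h := ((ContinuousLinearMap.apply ℝ ℝ v).hasFDerivAt.comp x hx)
    have : (fun y => fderiv ℝ u y v)
        = (ContinuousLinearMap.apply ℝ ℝ v) ∘ (fderiv ℝ u) := rfl
    rw [this, h.fderiv]
    rfl
  simp only [pd_def]
  rw [hrep, hrep, key]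

lemma sm_driftLap {u : En n → ℝ} (hu : ContDiff ℝ (⊤ : ℕ∞) u) : ContDiff ℝ (⊤ : ℕ∞) (driftLap u) := by
  have h1 : ContDiff ℝ (⊤ : ℕ∞) (lap u) :=
    ContDiff.sum (fun i _ => contDiff_pd (contDiff_pd hu i) i)
  have h2 : ContDiff ℝ (⊤ : ℕ∞) (fun x : En n => ∑ i, (x i / 2) * pd i u x) :=
    ContDiff.sum (fun i _ => ((sm_coord i).div_const 2).mul (contDiff_pd hu i))
  exact h1.sub h2

lemma sm_divf {Y : En n → Fin n → ℝ} (hY : ∀ k, ContDiff ℝ (⊤ : ℕ∞) (fun y => Y y k)) :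
    ContDiff ℝ (⊤ : ℕ∞) (divf Y) :=
  ContDiff.sum (fun i _ => (contDiff_pd (hY i) i).sub ((hY i).mul ((sm_coord i).div_const 2)))

/-- (a): `∂ᵢ (ℒ u) = ℒ (∂ᵢ u) - (1/2) ∂ᵢ u`. -/
lemma pd_driftLap {u : En n → ℝ} (hu : ContDiff ℝ (⊤ : ℕ∞) u) (i : Fin n) (x : En n) :
    pd i (driftLap u) x = driftLap (pd i u) x - (1/2) * pd i u x := by
  have hpd : ∀ a : Fin n, ContDiff ℝ (⊤ : ℕ∞) (pd a u) := contDiff_pd hu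
  have hpd2 : ∀ a b : Fin n, ContDiff ℝ (⊤ : ℕ∞) (pd a (pd b u)) := fun a b => contDiff_pd (hpd b) a
  have hshow : driftLap u
      = fun y => (∑ a, pd a (pd a u) y) - ∑ a, (y a / 2) * pd a u y := rfl
  rw [hshow, pd_sub i x
      (by exact diffAt_of_sm (ContDiff.sum (fun a _ => hpd2 a a)) x)
      (by exact diffAt_of_sm (ContDiff.sum (fun a _ => ((sm_coord a).div_const 2).mul (hpd a))) x)]
  rw [pd_sum i x (fun a _ => diffAt_of_sm (hpd2 a a) x)]
  rw [pd_sum i x (fun a _ => diffAt_of_sm (((sm_coord a).div_const 2).mul (hpd a)) x)]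
  have hterm : ∀ a : Fin n,
      pd i (fun y => (y a / 2) * pd a u y) x
        = (if a = i then 1 else 0) / 2 * pd a u x + (x a / 2) * pd a (pd i u) x := by
    intro a
    rw [pd_mul i x (diffAt_of_sm ((sm_coord a).div_const 2) x) (diffAt_of_sm (hpd a) x)]
    have : pd i (fun y : En n => y a / 2) x = (if a = i then 1 else 0) / 2 := by
      have h2 : (fun y : En n => y a / 2) = fun y => (1/2) * y a := by funext y; ring
      rw [h2, pd_const_mul (1/2) i x (diffAt_of_sm (sm_coord a) x), pd_coord]
      ring
    rw [this, pd_comm hu i a x]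
  have hcomm : ∀ a : Fin n, pd i (pd a (pd a u)) x = pd a (pd a (pd i u)) x := by
    intro a
    rw [pd_comm (hpd a) i a x]
    have : pd i (pd a u) = pd a (pd i u) := funext (fun y => pd_comm hu i a y)
    rw [this]
  rw [Finset.sum_congr rfl (fun a _ => hcomm a), Finset.sum_congr rfl (fun a _ => hterm a)]
  rw [Finset.sum_add_distrib]
  have hdelta : ∑ a : Fin n, (if a = i then 1 else 0) / 2 * pd a u x = (1/2) * pd i u x := by
    rw [Finset.sum_congr rfl (fun a _ => by
      show (if a = i then (1:ℝ) else 0) / 2 * pd a u x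
          = if a = i then (1/2) * pd a u x else 0
      split <;> ring)]
    simp
  rw [hdelta]
  show _ = ((∑ a, pd a (pd a (pd i u)) x) - ∑ a, (x a / 2) * pd a (pd i u) x) - 1/2 * pd i u x
  ring

lemma driftLap_sub {u v : En n → ℝ} (hu : ContDiff ℝ (⊤ : ℕ∞) u) (hv : ContDiff ℝ (⊤ : ℕ∞) v) (x : En n) :
    driftLap (fun y => u y - v y) x = driftLap u x - driftLap v x := by
  have h1 : ∀ a : Fin n, pd a (fun y => u y - v y) = fun z => pd a u z - pd a v z :=
    fun a => funext (fun z => pd_sub a z (diffAt_of_sm hu z) (diffAt_of_sm hv z))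
  have L1 : ∑ a : Fin n, pd a (pd a (fun y => u y - v y)) x
      = ∑ a : Fin n, (pd a (pd a u) x - pd a (pd a v) x) :=
    Finset.sum_congr rfl (fun a _ => by
      rw [h1 a, pd_sub a x (diffAt_of_sm (contDiff_pd hu a) x) (diffAt_of_sm (contDiff_pd hv a) x)])
  have L2 : ∑ a : Fin n, (x a / 2) * pd a (fun y => u y - v y) x
      = ∑ a : Fin n, ((x a / 2) * pd a u x - (x a / 2) * pd a v x) :=
    Finset.sum_congr rfl (fun a _ => by rw [congrFun (h1 a) x]; ring)
  simp only [driftLap, lap]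
  rw [L1, L2, Finset.sum_sub_distrib, Finset.sum_sub_distrib]
  ring

lemma driftLap_const_mul {u : En n → ℝ} (c : ℝ) (hu : ContDiff ℝ (⊤ : ℕ∞) u) (x : En n) :
    driftLap (fun y => c * u y) x = c * driftLap u x := by
  have h1 : ∀ a : Fin n, pd a (fun y => c * u y) = fun z => c * pd a u z :=
    fun a => funext (fun z => pd_const_mul c a z (diffAt_of_sm hu z))
  have L1 : ∑ a : Fin n, pd a (pd a (fun y => c * u y)) x
      = ∑ a : Fin n, c * pd a (pd a u) x :=
    Finset.sum_congr rfl (fun a _ => by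
      rw [h1 a, pd_const_mul c a x (diffAt_of_sm (contDiff_pd hu a) x)])
  have L2 : ∑ a : Fin n, (x a / 2) * pd a (fun y => c * u y) x
      = ∑ a : Fin n, c * ((x a / 2) * pd a u x) :=
    Finset.sum_congr rfl (fun a _ => by rw [congrFun (h1 a) x]; ring)
  simp only [driftLap, lap]
  rw [L1, L2, ← Finset.mul_sum, ← Finset.mul_sum]
  ring

lemma driftLap_sum {ι : Type*} {s : Finset ι} {g : ι → En n → ℝ}
    (hg : ∀ j ∈ s, ContDiff ℝ (⊤ : ℕ∞) (g j)) (x : En n) :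
    driftLap (fun y => ∑ j ∈ s, g j y) x = ∑ j ∈ s, driftLap (g j) x := by
  have h1 : ∀ a : Fin n, pd a (fun y => ∑ j ∈ s, g j y) = fun z => ∑ j ∈ s, pd a (g j) z :=
    fun a => funext (fun z => pd_sum a z (fun j hj => diffAt_of_sm (hg j hj) z))
  have L1 : ∑ a : Fin n, pd a (pd a (fun y => ∑ j ∈ s, g j y)) x
      = ∑ a : Fin n, ∑ j ∈ s, pd a (pd a (g j)) x :=
    Finset.sum_congr rfl (fun a _ => by
      rw [h1 a, pd_sum a x (fun j hj => diffAt_of_sm (contDiff_pd (hg j hj) a) x)])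
  have L2 : ∑ a : Fin n, (x a / 2) * pd a (fun y => ∑ j ∈ s, g j y) x
      = ∑ a : Fin n, ∑ j ∈ s, (x a / 2) * pd a (g j) x :=
    Finset.sum_congr rfl (fun a _ => by rw [congrFun (h1 a) x, Finset.mul_sum])
  simp only [driftLap, lap]
  rw [L1, L2, Finset.sum_comm, Finset.sum_comm (s := Finset.univ) (t := s), ← Finset.sum_sub_distrib]

/-- (c): `ℒ(x_k u) = x_k ℒu + 2 ∂_k u - (x_k/2) u`. -/
lemma driftLap_coord_mul {u : En n → ℝ} (hu : ContDiff ℝ (⊤ : ℕ∞) u) (k : Fin n) (x : En n) :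
    driftLap (fun y => y k * u y) x
      = x k * driftLap u x + 2 * pd k u x - (x k / 2) * u x := by
  have hpd : ∀ a : Fin n, ContDiff ℝ (⊤ : ℕ∞) (pd a u) := contDiff_pd hu
  have h1 : ∀ a : Fin n, pd a (fun y => y k * u y)
      = fun z => (if k = a then 1 else 0) * u z + z k * pd a u z := by
    intro a; funext z
    rw [pd_mul a z (diffAt_of_sm (sm_coord k) z) (diffAt_of_sm hu z), pd_coord]
  have h2 : ∀ a : Fin n, pd a (pd a (fun y => y k * u y)) x
      = (if k = a then 1 else 0) * pd a u x
        + ((if k = a then 1 else 0) * pd a u x + x k * pd a (pd a u) x) := by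
    intro a
    rw [h1 a, pd_add a x
      (diffAt_of_sm (contDiff_const.mul hu) x)
      (diffAt_of_sm ((sm_coord k).mul (hpd a)) x),
      pd_const_mul _ a x (diffAt_of_sm hu x),
      pd_mul a x (diffAt_of_sm (sm_coord k) x) (diffAt_of_sm (hpd a) x), pd_coord]
  have hd1 : ∑ a : Fin n, (if k = a then (1:ℝ) else 0) * pd a u x = pd k u x := by
    rw [Finset.sum_congr rfl (fun a (_ : a ∈ Finset.univ) => by
      show (if k = a then (1:ℝ) else 0) * pd a u x = if a = k then pd a u x else 0
      by_cases h : a = k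
      · subst h; simp
      · rw [if_neg h, if_neg (fun hh => h hh.symm)]; ring)]
    simp
  have L1 : ∑ a : Fin n, pd a (pd a (fun y => y k * u y)) x
      = 2 * pd k u x + x k * ∑ a : Fin n, pd a (pd a u) x := by
    rw [Finset.sum_congr rfl (fun a _ => h2 a), Finset.sum_add_distrib, Finset.sum_add_distrib,
      hd1, ← Finset.mul_sum]
    try ring
  have L2 : ∑ a : Fin n, (x a / 2) * pd a (fun y => y k * u y) x
      = (x k / 2) * u x + x k * ∑ a : Fin n, x a / 2 * pd a u x := by
    have per : ∀ a : Fin n, (x a / 2) * pd a (fun y => y k * u y) x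
        = (if a = k then x a / 2 * u x else 0) + x k * (x a / 2 * pd a u x) := by
      intro a
      rw [congrFun (h1 a) x]
      by_cases h : a = k
      · subst h; simp; ring
      · rw [if_neg (fun hh => h hh.symm), if_neg h]; ring
    rw [Finset.sum_congr rfl (fun a _ => per a), Finset.sum_add_distrib, ← Finset.mul_sum]
    simp
  simp only [driftLap, lap]
  rw [L1, L2]
  ring

lemma pd_coord_div2 (i j : Fin n) (x : En n) :
    pd i (fun y : En n => y j / 2) x = (if j = i then 1 else 0) / 2 := by
  have h2 : (fun y : En n => y j / 2) = fun y => (1/2) * y j := by funext y; ring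
  rw [h2, pd_const_mul (1/2) i x (diffAt_of_sm (sm_coord j) x), pd_coord]
  ring

lemma driftLap_add {u v : En n → ℝ} (hu : ContDiff ℝ (⊤ : ℕ∞) u) (hv : ContDiff ℝ (⊤ : ℕ∞) v) (x : En n) :
    driftLap (fun y => u y + v y) x = driftLap u x + driftLap v x := by
  have h1 : ∀ a : Fin n, pd a (fun y => u y + v y) = fun z => pd a u z + pd a v z :=
    fun a => funext (fun z => pd_add a z (diffAt_of_sm hu z) (diffAt_of_sm hv z))
  have L1 : ∑ a : Fin n, pd a (pd a (fun y => u y + v y)) x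
      = ∑ a : Fin n, (pd a (pd a u) x + pd a (pd a v) x) :=
    Finset.sum_congr rfl (fun a _ => by
      rw [h1 a, pd_add a x (diffAt_of_sm (contDiff_pd hu a) x) (diffAt_of_sm (contDiff_pd hv a) x)])
  have L2 : ∑ a : Fin n, (x a / 2) * pd a (fun y => u y + v y) x
      = ∑ a : Fin n, ((x a / 2) * pd a u x + (x a / 2) * pd a v x) :=
    Finset.sum_congr rfl (fun a _ => by rw [congrFun (h1 a) x]; ring)
  simp only [driftLap, lap]
  rw [L1, L2, Finset.sum_add_distrib, Finset.sum_add_distrib]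
  ring

lemma driftLap_combo {p q r : En n → ℝ} (hp : ContDiff ℝ (⊤ : ℕ∞) p) (hq : ContDiff ℝ (⊤ : ℕ∞) q)
    (hr : ContDiff ℝ (⊤ : ℕ∞) r) (a b c : ℝ) (x : En n) :
    driftLap (fun y => a * p y + b * q y + c * r y) x
      = a * driftLap p x + b * driftLap q x + c * driftLap r x := by
  have h1 : driftLap (fun y => a * p y + b * q y + c * r y) x
      = driftLap (fun y => (a * p y + b * q y)) x + driftLap (fun y => c * r y) x :=
    driftLap_add ((contDiff_const.mul hp).add (contDiff_const.mul hq)) (contDiff_const.mul hr) x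
  rw [h1, driftLap_add (contDiff_const.mul hp) (contDiff_const.mul hq) x,
    driftLap_const_mul a hp x, driftLap_const_mul b hq x, driftLap_const_mul c hr x]

lemma pd_combo {p q r : En n → ℝ} (hp : ContDiff ℝ (⊤ : ℕ∞) p) (hq : ContDiff ℝ (⊤ : ℕ∞) q)
    (hr : ContDiff ℝ (⊤ : ℕ∞) r) (a b c : ℝ) (i : Fin n) (x : En n) :
    pd i (fun y => a * p y + b * q y + c * r y) x
      = a * pd i p x + b * pd i q x + c * pd i r x := by
  rw [pd_add i x (diffAt_of_sm ((contDiff_const.mul hp).add (contDiff_const.mul hq)) x)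
      (diffAt_of_sm (contDiff_const.mul hr) x),
    pd_add i x (diffAt_of_sm (contDiff_const.mul hp) x) (diffAt_of_sm (contDiff_const.mul hq) x),
    pd_const_mul a i x (diffAt_of_sm hp x), pd_const_mul b i x (diffAt_of_sm hq x),
    pd_const_mul c i x (diffAt_of_sm hr x)]

lemma divf_combo {P Q R : En n → Fin n → ℝ}
    (hP : ∀ k, ContDiff ℝ (⊤ : ℕ∞) (fun y => P y k)) (hQ : ∀ k, ContDiff ℝ (⊤ : ℕ∞) (fun y => Q y k))
    (hR : ∀ k, ContDiff ℝ (⊤ : ℕ∞) (fun y => R y k)) (a b c : ℝ) (x : En n) :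
    divf (fun y k => a * P y k + b * Q y k + c * R y k) x
      = a * divf P x + b * divf Q x + c * divf R x := by
  simp only [divf]
  have per : ∀ k : Fin n,
      pd k (fun y => a * P y k + b * Q y k + c * R y k) x
          - (a * P x k + b * Q x k + c * R x k) * (x k / 2)
      = a * (pd k (fun y => P y k) x - P x k * (x k / 2))
        + b * (pd k (fun y => Q y k) x - Q x k * (x k / 2))
        + c * (pd k (fun y => R y k) x - R x k * (x k / 2)) := by
    intro k
    rw [pd_combo (hP k) (hQ k) (hR k) a b c k x]
    ring
  rw [Finset.sum_congr rfl (fun k _ => per k), Finset.sum_add_distrib, Finset.sum_add_distrib,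
    ← Finset.mul_sum, ← Finset.mul_sum, ← Finset.mul_sum]

/-- (b): `div_f (ℒY) = ℒ (div_f Y) + (1/2) div_f Y`. -/
lemma divf_driftLapV {Y : En n → Fin n → ℝ}
    (hY : ∀ k, ContDiff ℝ (⊤ : ℕ∞) (fun y => Y y k)) (x : En n) :
    divf (driftLapV Y) x = driftLap (divf Y) x + (1/2) * divf Y x := by
  have smk : ∀ k : Fin n, ContDiff ℝ (⊤ : ℕ∞) (fun y => pd k (fun z => Y z k) y - Y y k * (y k / 2)) :=
    fun k => (contDiff_pd (hY k) k).sub ((hY k).mul ((sm_coord k).div_const 2))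
  -- LHS
  have L : divf (driftLapV Y) x
      = ∑ k : Fin n, (driftLap (pd k (fun z => Y z k)) x - 1/2 * pd k (fun z => Y z k) x
          - driftLap (fun z => Y z k) x * (x k / 2)) := by
    simp only [divf]
    refine Finset.sum_congr rfl (fun k _ => ?_)
    have e1 : (fun y => driftLapV Y y k) = driftLap (fun z => Y z k) := rfl
    rw [e1, pd_driftLap (hY k) k x]
    rfl
  -- RHS
  have R1 : driftLap (divf Y) x
      = ∑ k : Fin n, driftLap (fun y => pd k (fun z => Y z k) y - Y y k * (y k / 2)) x := by
    have e2 : divf Y = fun y => ∑ k : Fin n, (pd k (fun z => Y z k) y - Y y k * (y k / 2)) := rfl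
    rw [e2, driftLap_sum (fun k _ => smk k) x]
  have R2 : ∀ k : Fin n, driftLap (fun y => pd k (fun z => Y z k) y - Y y k * (y k / 2)) x
      = driftLap (pd k (fun z => Y z k)) x
        - (1/2) * (x k * driftLap (fun z => Y z k) x + 2 * pd k (fun z => Y z k) x
            - (x k / 2) * Y x k) := by
    intro k
    rw [driftLap_sub (contDiff_pd (hY k) k) ((hY k).mul ((sm_coord k).div_const 2)) x]
    have e3 : (fun y : En n => Y y k * (y k / 2)) = fun y => (1/2) * (y k * Y y k) := by
      funext y; ring
    rw [e3, driftLap_const_mul (1/2) ((sm_coord k).mul (hY k)) x,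
      driftLap_coord_mul (hY k) k x]
  have R3 : (1/2) * divf Y x
      = ∑ k : Fin n, (1/2) * (pd k (fun z => Y z k) x - Y x k * (x k / 2)) := by
    simp only [divf, Finset.mul_sum]
  rw [L, R1, Finset.sum_congr rfl (fun k _ => R2 k), R3, ← Finset.sum_add_distrib]
  exact Finset.sum_congr rfl (fun k _ => by ring)

/-- Lemma B: `∂ᵢ div_f (ℒ Y) = ℒ (∂ᵢ div_f Y)`. -/
lemma pd_divf_driftLapV {Y : En n → Fin n → ℝ}
    (hY : ∀ k, ContDiff ℝ (⊤ : ℕ∞) (fun y => Y y k)) (i : Fin n) (x : En n) :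
    pd i (divf (driftLapV Y)) x = driftLap (pd i (divf Y)) x := by
  have h : divf (driftLapV Y) = fun y => driftLap (divf Y) y + (1/2) * divf Y y :=
    funext (divf_driftLapV hY)
  rw [h, pd_add i x (diffAt_of_sm (sm_driftLap (sm_divf hY)) x)
      (diffAt_of_sm (contDiff_const.mul (sm_divf hY)) x),
    pd_const_mul _ i x (diffAt_of_sm (sm_divf hY) x),
    pd_driftLap (sm_divf hY) i x]
  ring

/-- Lemma A: `𝒫Y = -(1/2)∇(div_f Y) - (1/4)Y - (1/2)ℒY`. -/
lemma PopV_eq {Y : En n → Fin n → ℝ}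
    (hY : ∀ k, ContDiff ℝ (⊤ : ℕ∞) (fun y => Y y k)) (x : En n) (i : Fin n) :
    Pop Y x i = (-(1/2)) * pd i (divf Y) x + (-(1/4)) * Y x i
      + (-(1/2)) * driftLapV Y x i := by
  have smk : ∀ k : Fin n, ContDiff ℝ (⊤ : ℕ∞) (fun y => pd k (fun z => Y z k) y - Y y k * (y k / 2)) :=
    fun k => (contDiff_pd (hY k) k).sub ((hY k).mul ((sm_coord k).div_const 2))
  -- LHS as sum
  have hpdstar : ∀ j : Fin n, pd j (fun y => divfStar Y y i j) x
      = (-(1/2)) * (pd i (pd j (fun z => Y z j)) x + pd j (pd j (fun z => Y z i)) x) := by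
    intro j
    have hstar : (fun y => divfStar Y y i j)
        = fun y => (-(1/2)) * (pd i (fun z => Y z j) y + pd j (fun z => Y z i) y) := by
      funext y; simp only [divfStar]; ring
    rw [hstar, pd_const_mul _ j x
        (diffAt_of_sm ((contDiff_pd (hY j) i).add (contDiff_pd (hY i) j)) x),
      pd_add j x (diffAt_of_sm (contDiff_pd (hY j) i) x) (diffAt_of_sm (contDiff_pd (hY i) j) x),
      pd_comm (hY j) j i x]
  have hL : Pop Y x i = ∑ j : Fin n,
      ((-(1/2)) * (pd i (pd j (fun z => Y z j)) x + pd j (pd j (fun z => Y z i)) x)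
        - (x j / 2) * (-(pd i (fun z => Y z j) x + pd j (fun z => Y z i) x) / 2)) := by
    simp only [Pop, divfT]
    refine Finset.sum_congr rfl (fun j _ => ?_)
    rw [hpdstar j]
    rfl
  -- ∂ᵢ div_f Y as sum
  have hdelta : ∑ j : Fin n, Y x j * ((if j = i then (1:ℝ) else 0) / 2) = Y x i / 2 := by
    rw [Finset.sum_congr rfl (fun j (_ : j ∈ Finset.univ) => by
      show Y x j * ((if j = i then (1:ℝ) else 0) / 2) = if j = i then Y x j / 2 else 0
      split <;> ring)]
    simp
  have hdiv : pd i (divf Y) x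
      = (∑ j : Fin n, (pd i (pd j (fun z => Y z j)) x - pd i (fun z => Y z j) x * (x j / 2)))
        - Y x i / 2 := by
    have e2 : divf Y = fun y => ∑ k : Fin n, (pd k (fun z => Y z k) y - Y y k * (y k / 2)) := rfl
    rw [e2, pd_sum i x (fun k _ => diffAt_of_sm (smk k) x)]
    have per : ∀ j : Fin n,
        pd i (fun y => pd j (fun z => Y z j) y - Y y j * (y j / 2)) x
          = (pd i (pd j (fun z => Y z j)) x - pd i (fun z => Y z j) x * (x j / 2))
            - Y x j * ((if j = i then (1:ℝ) else 0) / 2) := by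
      intro j
      rw [pd_sub i x (diffAt_of_sm (contDiff_pd (hY j) j) x)
          (diffAt_of_sm ((hY j).mul ((sm_coord j).div_const 2)) x),
        pd_mul i x (diffAt_of_sm (hY j) x) (diffAt_of_sm ((sm_coord j).div_const 2) x),
        pd_coord_div2]
      ring
    rw [Finset.sum_congr rfl (fun j _ => per j), Finset.sum_sub_distrib, hdelta]
  -- ℒY i as sums
  have hlv : driftLapV Y x i
      = (∑ j : Fin n, pd j (pd j (fun z => Y z i)) x)
        - ∑ j : Fin n, (x j / 2) * pd j (fun z => Y z i) x := rfl
  rw [hL, hdiv, hlv]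
  rw [show ∀ A B C : ℝ, (-(1/2)) * (A - Y x i / 2) + (-(1/4)) * Y x i + (-(1/2)) * (B - C)
      = (-(1/2)) * A + ((-(1/2)) * B + (1/2) * C) from fun A B C => by ring]
  rw [Finset.mul_sum, Finset.mul_sum, Finset.mul_sum, ← Finset.sum_add_distrib,
    ← Finset.sum_add_distrib]
  exact Finset.sum_congr rfl (fun j _ => by ring)

/-- On the Gaussian soliton, `ℒ` and `𝒫` commute on smooth vector fields, and moreover
`𝒫(∇ div_f V) = ∇ div_f (𝒫V)`. -/
theorem stmt_4 (n : ℕ) (V : En n → Fin n → ℝ) (hV : ContDiff ℝ (⊤ : ℕ∞) V) :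
    (∀ (x : En n) (i : Fin n), driftLapV (Pop V) x i = Pop (driftLapV V) x i) ∧
    (∀ (x : En n) (i : Fin n), Pop (gradV (divf V)) x i = gradV (divf (Pop V)) x i) := by
  have hVk : ∀ k, ContDiff ℝ (⊤ : ℕ∞) (fun y => V y k) := fun k => contDiff_pi.mp hV k
  have hdivfV : ContDiff ℝ (⊤ : ℕ∞) (divf V) := sm_divf hVk
  have hLVk : ∀ k, ContDiff ℝ (⊤ : ℕ∞) (fun y => driftLapV V y k) := fun k => sm_driftLap (hVk k)
  have hgradk : ∀ k, ContDiff ℝ (⊤ : ℕ∞) (fun y => gradV (divf V) y k) := fun k => contDiff_pd hdivfV k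
  constructor
  · intro x i
    have hfun : (fun y => Pop V y i)
        = fun y => (-(1/2)) * pd i (divf V) y + (-(1/4)) * V y i
            + (-(1/2)) * driftLapV V y i :=
      funext (fun y => PopV_eq hVk y i)
    have L : driftLapV (Pop V) x i
        = (-(1/2)) * driftLap (pd i (divf V)) x + (-(1/4)) * driftLap (fun y => V y i) x
          + (-(1/2)) * driftLap (fun y => driftLapV V y i) x := by
      show driftLap (fun y => Pop V y i) x = _
      rw [hfun]
      exact driftLap_combo (contDiff_pd hdivfV i) (hVk i) (hLVk i) _ _ _ x
    have R : Pop (driftLapV V) x i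
        = (-(1/2)) * pd i (divf (driftLapV V)) x + (-(1/4)) * driftLapV V x i
          + (-(1/2)) * driftLapV (driftLapV V) x i := PopV_eq hLVk x i
    rw [L, R, pd_divf_driftLapV hVk i x]
    rfl
  · intro x i
    have hfun2 : Pop V = fun y k => (-(1/2)) * gradV (divf V) y k + (-(1/4)) * V y k
        + (-(1/2)) * driftLapV V y k := by
      funext y k; exact PopV_eq hVk y k
    have L : Pop (gradV (divf V)) x i
        = (-(1/2)) * pd i (divf (gradV (divf V))) x + (-(1/4)) * gradV (divf V) x i
          + (-(1/2)) * driftLapV (gradV (divf V)) x i := PopV_eq hgradk x i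
    have R1 : divf (Pop V) = fun z => (-(1/2)) * divf (gradV (divf V)) z + (-(1/4)) * divf V z
        + (-(1/2)) * divf (driftLapV V) z := by
      funext z
      rw [hfun2]
      exact divf_combo hgradk hVk hLVk _ _ _ z
    have R : gradV (divf (Pop V)) x i
        = (-(1/2)) * pd i (divf (gradV (divf V))) x + (-(1/4)) * pd i (divf V) x
          + (-(1/2)) * pd i (divf (driftLapV V)) x := by
      show pd i (divf (Pop V)) x = _
      rw [R1]
      exact pd_combo (sm_divf hgradk) (sm_divf hVk) (sm_divf hLVk) _ _ _ i x
    rw [L, R, pd_divf_driftLapV hVk i x]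
    rfl
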